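/- arXiv:1205.2681 — 3 statements merged into one kernel-verified Lean document; each statement's English description precedes it below -/
import Mathlib

section
/- Let A be a |U|×|X| column-stochastic matrix with no zero rows and left null space of dimension n = |U| − rank(A). If n = |U| − 1 and (I Υ̃) is the row-reduced echelon basis matrix of the left null space (Υ̃ an n×1 column), then each entry of Υ̃ is negative, and for each i the L1-normalization of row i of (I Υ̃) is an (a_min, 0)-double polarized vector in the left null space of A. -/
open Finset

/-- Minimum row sum of the matrix `A`. -/
noncomputable def Amin {U X : ℕ} [NeZero U] (A : Matrix (Fin U) (Fin X) ℝ) : ℝ :=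
  Finset.univ.inf' Finset.univ_nonempty (fun i => ∑ j, A i j)

/-- The constant `a_min = A_min / (|U|(|X| + A_min))`. -/
noncomputable def amin {U X : ℕ} [NeZero U] (A : Matrix (Fin U) (Fin X) ℝ) : ℝ :=
  Amin A / (U * (X + Amin A))

/-!
A left null vector `w` of `A` is orthogonal to the row sums `R = A *ᵥ 1`. For the row
`e_i + Υ̃_i e_{U-1}` this reads `R_i + Υ̃_i R_{U-1} = 0`, so `Υ̃_i = -R_i / R_{U-1} < 0`, and
after dividing by the L1 norm `(R_i + R_{U-1}) / R_{U-1}` the two entries become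
`R_{U-1} / (R_i + R_{U-1})` and `-R_i / (R_i + R_{U-1})`. Both have absolute value at least
`A_min / X ≥ a_min`, because every row sum is at least `A_min` and all row sums add up to `X`
(the columns are stochastic).
-/

section RowSums

variable {m n : Type*} [Fintype n] {A : Matrix m n ℝ}

lemma rowSum_pos (hA0 : ∀ i j, 0 ≤ A i j) {i : m} (hi : ∃ j, A i j ≠ 0) :
    0 < ∑ j, A i j := by
  obtain ⟨j, hj⟩ := hi
  exact sum_pos' (fun l _ => hA0 i l) ⟨j, mem_univ j, (hA0 i j).lt_of_ne' hj⟩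

lemma rowSum_add_rowSum_le_card [Fintype m] [DecidableEq m] (hA0 : ∀ i j, 0 ≤ A i j)
    (hcol : ∀ j, ∑ i, A i j = 1) {p q : m} (hpq : p ≠ q) :
    ∑ j, A p j + ∑ j, A q j ≤ Fintype.card n :=
  calc ∑ j, A p j + ∑ j, A q j = ∑ k ∈ {p, q}, ∑ j, A k j :=
      (sum_pair (f := fun k => ∑ j, A k j) hpq).symm
    _ ≤ ∑ k, ∑ j, A k j :=
      sum_le_sum_of_subset_of_nonneg (subset_univ _) fun k _ _ => sum_nonneg fun j _ => hA0 k j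
    _ = ∑ j, ∑ k, A k j := Finset.sum_comm
    _ = Fintype.card n := by simp [hcol]

lemma sum_mul_rowSum_eq_zero [Fintype m] {w : m → ℝ} (hw : ∀ j, ∑ k, w k * A k j = 0) :
    ∑ k, w k * ∑ j, A k j = 0 := by
  simp_rw [mul_sum]
  rw [sum_comm]
  simp [hw]

end RowSums

lemma sum_abs_div_sum_abs {ι : Type*} [Fintype ι] {w : ι → ℝ} (hw : ∑ l, |w l| ≠ 0) :
    ∑ k, |w k / (∑ l, |w l|)| = 1 := by
  simp_rw [abs_div, abs_of_nonneg (sum_nonneg fun l _ => abs_nonneg (w l)), ← sum_div]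
  exact div_self hw

section TwoEntry

variable {m n : Type*} [Fintype m] [Fintype n] {A : Matrix m n ℝ} {w : m → ℝ} {p q : m}

lemma sum_eq_add_of_support_subset_pair (hpq : p ≠ q) (hw : ∀ j, j ≠ p ∧ j ≠ q → w j = 0)
    {f : m → ℝ} (hf : ∀ j, w j = 0 → f j = 0) : ∑ j, f j = f p + f q :=
  Fintype.sum_eq_add p q hpq fun j hj => hf j (hw j hj)

lemma apply_eq_neg_rowSum_div_of_support_subset_pair (hpq : p ≠ q)
    (hw : ∀ j, j ≠ p ∧ j ≠ q → w j = 0) (hwp : w p = 1) (hnull : ∀ j, ∑ k, w k * A k j = 0)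
    (hpos : ∀ k, 0 < ∑ j, A k j) :
    w q = -((∑ j, A p j) / ∑ j, A q j) := by
  have h := sum_mul_rowSum_eq_zero hnull
  rw [sum_eq_add_of_support_subset_pair hpq hw fun j hj => by simp [hj], hwp, one_mul] at h
  field_simp [(hpos q).ne']
  linarith

lemma sum_abs_eq_of_support_subset_pair (hpq : p ≠ q) (hw : ∀ j, j ≠ p ∧ j ≠ q → w j = 0)
    (hwp : w p = 1) (hnull : ∀ j, ∑ k, w k * A k j = 0) (hpos : ∀ k, 0 < ∑ j, A k j) :
    ∑ l, |w l| = (∑ j, A p j + ∑ j, A q j) / ∑ j, A q j := by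
  rw [sum_eq_add_of_support_subset_pair hpq hw fun j hj => by simp [hj], hwp,
    apply_eq_neg_rowSum_div_of_support_subset_pair hpq hw hwp hnull hpos, abs_neg,
    abs_of_pos (div_pos (hpos p) (hpos q))]
  field_simp [(hpos q).ne']
  ring

end TwoEntry

section Amin

variable {U X : ℕ} [NeZero U] {A : Matrix (Fin U) (Fin X) ℝ}

lemma Amin_le_rowSum (k : Fin U) : Amin A ≤ ∑ j, A k j :=
  inf'_le _ (mem_univ k)

lemma Amin_pos (hpos : ∀ k, 0 < ∑ j, A k j) : 0 < Amin A :=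
  (lt_inf'_iff _).2 fun k _ => hpos k

lemma amin_le_rowSum_div (hA0 : ∀ i j, 0 ≤ A i j) (hcol : ∀ j, ∑ i, A i j = 1)
    (hpos : ∀ k, 0 < ∑ j, A k j) {p q : Fin U} (hpq : p ≠ q) :
    amin A ≤ (∑ j, A q j) / (∑ j, A p j + ∑ j, A q j) := by
  have hAmin := Amin_pos hpos
  have hpair := rowSum_add_rowSum_le_card hA0 hcol hpq
  rw [Fintype.card_fin] at hpair
  have hU : (1 : ℝ) ≤ U := by exact_mod_cast NeZero.one_le
  apply div_le_div₀ (hpos q).le (Amin_le_rowSum q) (by linarith [hpos p, hpos q])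
  nlinarith

end Amin

theorem stmt_15 {U X : ℕ} [NeZero U] (hU2 : 2 ≤ U)
    (A : Matrix (Fin U) (Fin X) ℝ)
    (hA0 : ∀ i j, 0 ≤ A i j) (hAcol : ∀ j, ∑ i, A i j = 1)
    (hArow : ∀ i, ∃ j, A i j ≠ 0)
    (Υt : Fin (U - 1) → ℝ)
    (row : Fin (U - 1) → Fin U → ℝ)
    (hrowdef : ∀ i j, row i j =
      if (j : ℕ) = (i : ℕ) then 1 else if (j : ℕ) = U - 1 then Υt i else 0)
    (hnull : ∀ i j, ∑ k, row i k * A k j = 0) :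
    ∀ i : Fin (U - 1), Υt i < 0 ∧
      (∀ j, ∑ k, (row i k / (∑ l, |row i l|)) * A k j = 0) ∧
      (∑ k, |row i k / (∑ l, |row i l|)| = 1) ∧
      amin A ≤ row i ⟨(i : ℕ), by have := i.isLt; omega⟩ / (∑ l, |row i l|) ∧
      row i ⟨U - 1, by omega⟩ / (∑ l, |row i l|) ≤ -(amin A) ∧
      (∀ j : Fin U, (j : ℕ) ≠ (i : ℕ) → (j : ℕ) ≠ U - 1 →
        row i j / (∑ l, |row i l|) = 0) := by
  intro i
  set p : Fin U := ⟨i, by omega⟩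
  set q : Fin U := ⟨U - 1, by omega⟩
  have hpq : p ≠ q := Fin.ne_of_val_ne (by simp only [p, q]; omega)
  have hrow_p : row i p = 1 := by simp [hrowdef, p]
  have hrow_q : row i q = Υt i := by simp [hrowdef, q]; omega
  have hrow_off : ∀ j, j ≠ p ∧ j ≠ q → row i j = 0 := fun j ⟨hp, hq⟩ => by
    simp [hrowdef, Fin.ext_iff, p, q] at hp hq ⊢
    simp [hp, hq]
  set R : Fin U → ℝ := fun k => ∑ j, A k j
  have hR : ∀ k, 0 < R k := fun k => rowSum_pos hA0 (hArow k)
  have hY : Υt i = -(R p / R q) := hrow_q ▸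
    apply_eq_neg_rowSum_div_of_support_subset_pair hpq hrow_off hrow_p (hnull i) hR
  have hS : ∑ l, |row i l| = (R p + R q) / R q :=
    sum_abs_eq_of_support_subset_pair hpq hrow_off hrow_p (hnull i) hR
  refine ⟨hY ▸ neg_neg_of_pos (div_pos (hR p) (hR q)), fun j => ?_,
    sum_abs_div_sum_abs (hS ▸ (div_pos (add_pos (hR p) (hR q)) (hR q)).ne'), ?_, ?_,
    fun j hjp hjq => ?_⟩
  · simp_rw [div_mul_eq_mul_div, ← sum_div, hnull i j, zero_div]
  · calc amin A ≤ R q / (R p + R q) := amin_le_rowSum_div hA0 hAcol hR hpq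
      _ = row i p / ∑ l, |row i l| := by rw [hS, hrow_p]; field_simp
  · calc row i q / ∑ l, |row i l| = -(R p / (R q + R p)) := by
          rw [hS, hrow_q, hY]; field_simp [(hR q).ne']; ring
      _ ≤ -amin A := neg_le_neg (amin_le_rowSum_div hA0 hAcol hR hpq.symm)
  · rw [hrow_off j ⟨Fin.ne_of_val_ne hjp, Fin.ne_of_val_ne hjq⟩, zero_div]
end

section
/- Let A (|U|×|X|) and B (|Y|×|U|) be column-stochastic matrices with A having no zero rows, (A,B) non-manipulable, and suppose the rows of Ψ^A are L1-normalized vectors in the left null space of A, Θ^A is a diagonal matrix with positive diagonal, Λ^B is a matrix whose columns lie in the right null space of B, and Λ is a further matrix, such that I − Φ̂ = (I − Φ^N) + Θ^A Ψ^A + Λ^B + Λ, where Φ^N and Φ̂ are column-stochastic |U|×|U| matrices. Then for every index i such that row Ψ^A_i is not (a_min, ε)-polarized at i (for fixed 0 < ε ≤ a_min), one has Θ^A_{i,i} ≤ (‖I − Φ^N‖₁ + ‖Λ^B + Λ‖₁)/ε. -/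
open Finset

/-- Entrywise L1-norm of a matrix. -/
noncomputable def l1M {m n : ℕ} (M : Matrix (Fin m) (Fin n) ℝ) : ℝ :=
  ∑ i, ∑ j, |M i j|

lemma abs_le_l1M {m n : ℕ} (M : Matrix (Fin m) (Fin n) ℝ) (i : Fin m) (j : Fin n) :
    |M i j| ≤ l1M M := by
  calc |M i j| ≤ ∑ j', |M i j'| :=
        Finset.single_le_sum (f := fun j' => |M i j'|) (fun _ _ => abs_nonneg _) (Finset.mem_univ j)
    _ ≤ l1M M :=
        Finset.single_le_sum (f := fun i => ∑ j', |M i j'|)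
          (fun _ _ => Finset.sum_nonneg fun _ _ => abs_nonneg _) (Finset.mem_univ i)

lemma Amin_pos_s17 {U X : ℕ} [NeZero U] (A : Matrix (Fin U) (Fin X) ℝ)
    (hA0 : ∀ i j, 0 ≤ A i j) (hArow : ∀ i, ∃ j, A i j ≠ 0) : 0 < Amin A := by
  rw [Amin, Finset.lt_inf'_iff]
  intro b _
  obtain ⟨j, hj⟩ := hArow b
  exact Finset.sum_pos' (fun l _ => hA0 b l)
    ⟨j, Finset.mem_univ j, (hA0 b j).lt_of_ne (Ne.symm hj)⟩

lemma exists_ge_amin {U X : ℕ} [NeZero U] [NeZero X]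
    (A : Matrix (Fin U) (Fin X) ℝ)
    (hA0 : ∀ i j, 0 ≤ A i j) (hAcol : ∀ j, ∑ i, A i j = 1)
    (hArow : ∀ i, ∃ j, A i j ≠ 0)
    (ψ : Fin U → ℝ) (hnorm : ∑ j, |ψ j| = 1)
    (hnull : ∀ l, ∑ j, ψ j * A j l = 0) :
    ∃ j, amin A ≤ ψ j := by
  have hU : (0:ℝ) < U := by exact_mod_cast Nat.pos_of_ne_zero (NeZero.ne U)
  have hX : (0:ℝ) < X := by exact_mod_cast Nat.pos_of_ne_zero (NeZero.ne X)
  have hAmin := Amin_pos_s17 A hA0 hArow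
  set r : Fin U → ℝ := fun j => ∑ l, A j l with hr
  have hrAmin : ∀ j, Amin A ≤ r j := fun j => Finset.inf'_le _ (Finset.mem_univ j)
  have hrX : ∀ j, r j ≤ X := by
    intro j
    calc r j ≤ ∑ _l : Fin X, (1:ℝ) := Finset.sum_le_sum (fun l _ => by
          calc A j l ≤ ∑ i, A i l :=
                Finset.single_le_sum (fun i _ => hA0 i l) (Finset.mem_univ j)
            _ = 1 := hAcol l)
      _ = X := by simp
  have hsum0 : ∑ j, ψ j * r j = 0 := by
    simp only [hr, Finset.mul_sum]
    rw [Finset.sum_comm]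
    simp [hnull]
  set P := ∑ j, max (ψ j) 0 with hP
  set N := ∑ j, max (-ψ j) 0 with hN
  have hPN : P + N = 1 := by
    rw [hP, hN, ← hnorm, ← Finset.sum_add_distrib]
    refine Finset.sum_congr rfl fun j _ => ?_
    rcases le_total (ψ j) 0 with h | h
    · rw [max_eq_right h, max_eq_left (neg_nonneg.mpr h), abs_of_nonpos h]; ring
    · rw [max_eq_left h, max_eq_right (neg_nonpos.mpr h), abs_of_nonneg h]; ring
  have hsplit : ∑ j, max (ψ j) 0 * r j = ∑ j, max (-ψ j) 0 * r j := by
    have heq : ∑ j, (max (ψ j) 0 * r j - max (-ψ j) 0 * r j) = ∑ j, ψ j * r j := by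
      refine Finset.sum_congr rfl fun j _ => ?_
      rcases le_total (ψ j) 0 with h | h
      · rw [max_eq_right h, max_eq_left (neg_nonneg.mpr h)]; ring
      · rw [max_eq_left h, max_eq_right (neg_nonpos.mpr h)]; ring
    rw [hsum0] at heq
    rw [Finset.sum_sub_distrib] at heq
    linarith
  have hNP : N * Amin A ≤ P * X := by
    calc N * Amin A = ∑ j, max (-ψ j) 0 * Amin A := by rw [hN, Finset.sum_mul]
      _ ≤ ∑ j, max (-ψ j) 0 * r j :=
          Finset.sum_le_sum fun j _ =>
            mul_le_mul_of_nonneg_left (hrAmin j) (le_max_right _ _)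
      _ = ∑ j, max (ψ j) 0 * r j := hsplit.symm
      _ ≤ ∑ j, max (ψ j) 0 * X :=
          Finset.sum_le_sum fun j _ =>
            mul_le_mul_of_nonneg_left (hrX j) (le_max_right _ _)
      _ = P * X := by rw [hP, Finset.sum_mul]
  have hPlb : Amin A / (X + Amin A) ≤ P := by
    rw [div_le_iff₀ (by linarith)]
    nlinarith [hPN]
  obtain ⟨j, _, hj⟩ : ∃ j ∈ Finset.univ, P / U ≤ max (ψ j) 0 := by
    apply Finset.exists_le_of_sum_le Finset.univ_nonempty
    calc ∑ _j : Fin U, P / U = U * (P / U) := by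
          rw [Finset.sum_const]; simp [Finset.card_univ, mul_comm]
      _ = P := by field_simp
      _ ≤ ∑ j, max (ψ j) 0 := hP.le
  have hamin_le : amin A ≤ max (ψ j) 0 := by
    refine le_trans ?_ hj
    rw [amin, div_le_div_iff₀ (by positivity) hU]
    calc Amin A * U = (Amin A / (X + Amin A)) * (U * (X + Amin A)) := by
          field_simp
      _ ≤ P * (U * (X + Amin A)) :=
          mul_le_mul_of_nonneg_right hPlb (by positivity)
  have hamin_pos : 0 < amin A := by rw [amin]; positivity
  rcases le_max_iff.mp hamin_le with h | h
  · exact ⟨j, h⟩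
  · exact absurd h (not_le.mpr hamin_pos)

/-- The observation channel `(A, B)` is manipulable. -/
def Manipulable {U X Y : ℕ} (A : Matrix (Fin U) (Fin X) ℝ)
    (B : Matrix (Fin Y) (Fin U) ℝ) : Prop :=
  ∃ Υ : Matrix (Fin U) (Fin U) ℝ, Υ ≠ 0 ∧
    (∀ j, ∑ i, Υ i j = 0) ∧ (∀ j, 0 ≤ Υ j j) ∧
    (∀ i j, i ≠ j → Υ i j ≤ 0) ∧ B * Υ * A = 0

theorem stmt_17 {U X Y : ℕ} [NeZero U] [NeZero X] [NeZero Y]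
    (A : Matrix (Fin U) (Fin X) ℝ) (B : Matrix (Fin Y) (Fin U) ℝ)
    (hA0 : ∀ i j, 0 ≤ A i j) (hAcol : ∀ j, ∑ i, A i j = 1)
    (hArow : ∀ i, ∃ j, A i j ≠ 0)
    (hB0 : ∀ i j, 0 ≤ B i j) (hBcol : ∀ j, ∑ i, B i j = 1)
    (hnm : ¬ Manipulable A B)
    (ΦN Φhat : Matrix (Fin U) (Fin U) ℝ)
    (hΦN0 : ∀ i j, 0 ≤ ΦN i j) (hΦNcol : ∀ j, ∑ i, ΦN i j = 1)
    (hΦhat0 : ∀ i j, 0 ≤ Φhat i j) (hΦhatcol : ∀ j, ∑ i, Φhat i j = 1)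
    -- rows of `Ψ^A` are L1-normalized vectors in the left null space of `A`
    (ΨA : Matrix (Fin U) (Fin U) ℝ)
    (hΨnorm : ∀ i, ∑ j, |ΨA i j| = 1)
    (hΨnull : ∀ i l, ∑ j, ΨA i j * A j l = 0)
    -- `Θ^A` is diagonal with positive diagonal entries `θ`
    (θ : Fin U → ℝ) (hθ : ∀ i, 0 < θ i)
    -- columns of `Λ^B` are in the right null space of `B`
    (ΛB Λ : Matrix (Fin U) (Fin U) ℝ)
    (hΛB : ∀ (l : Fin U) (i : Fin Y), ∑ j, B i j * ΛB j l = 0)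
    -- the decomposition `I - Φ̂ = (I - Φ^N) + Θ^A Ψ^A + Λ^B + Λ`
    (hdecomp : (1 : Matrix (Fin U) (Fin U) ℝ) - Φhat =
      (1 - ΦN) + Matrix.diagonal θ * ΨA + ΛB + Λ)
    (ε : ℝ) (hε0 : 0 < ε) (hεa : ε ≤ amin A) :
    ∀ i : Fin U, ¬ (amin A ≤ ΨA i i ∧ ∀ j, j ≠ i → ΨA i j ≤ ε) →
      θ i ≤ (l1M ((1 : Matrix (Fin U) (Fin U) ℝ) - ΦN) + l1M (ΛB + Λ)) / ε := by
  intro i hi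
  push_neg at hi
  obtain ⟨k, hk⟩ := exists_ge_amin A hA0 hAcol hArow (ΨA i) (hΨnorm i) (hΨnull i)
  obtain ⟨j, hji, hj⟩ : ∃ j, j ≠ i ∧ ε ≤ ΨA i j := by
    by_cases hki : k = i
    · obtain ⟨j, hji, hj⟩ := hi (hki ▸ hk)
      exact ⟨j, hji, hj.le⟩
    · exact ⟨k, hki, le_trans hεa hk⟩
  have hentry := congrFun (congrFun hdecomp i) j
  simp only [Matrix.sub_apply, Matrix.add_apply, Matrix.one_apply_ne (Ne.symm hji),
    Matrix.diagonal_mul] at hentry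
  -- hentry : 0 - Φhat i j = 0 - ΦN i j + θ i * ΨA i j + ΛB i j + Λ i j
  have habs1 : ΦN i j ≤ l1M ((1 : Matrix (Fin U) (Fin U) ℝ) - ΦN) := by
    have h1 : |((1 : Matrix (Fin U) (Fin U) ℝ) - ΦN) i j| = |ΦN i j| := by
      rw [Matrix.sub_apply, Matrix.one_apply_ne (Ne.symm hji), zero_sub, abs_neg]
    calc ΦN i j ≤ |ΦN i j| := le_abs_self _
      _ = |((1 : Matrix (Fin U) (Fin U) ℝ) - ΦN) i j| := h1.symm
      _ ≤ _ := abs_le_l1M _ i j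
  have habs2 : -(ΛB i j + Λ i j) ≤ l1M (ΛB + Λ) := by
    calc -(ΛB i j + Λ i j) ≤ |ΛB i j + Λ i j| := neg_le_abs _
      _ = |(ΛB + Λ) i j| := by rw [Matrix.add_apply]
      _ ≤ _ := abs_le_l1M _ i j
  have hkey : θ i * ΨA i j ≤ l1M ((1 : Matrix (Fin U) (Fin U) ℝ) - ΦN) + l1M (ΛB + Λ) := by
    have hΦ := hΦhat0 i j
    nlinarith [habs1, habs2, hentry]
  rw [le_div_iff₀ hε0]
  calc θ i * ε ≤ θ i * ΨA i j := mul_le_mul_of_nonneg_left hj (hθ i).le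
    _ ≤ _ := hkey
end

section
/- Let A be a |U|×|X| column-stochastic matrix with no zero rows. Suppose Υ is a nonzero |U|×|U| matrix with ΥA = 0 (Υ, acting on the left of A, annihilates A), whose columns are each balanced and (0,0)-polarized at their own index, and exactly the first m columns of Υ are nonzero with 2 ≤ m ≤ |U|. Define rows Υ̃_1 = Υ_1/‖Υ_1‖₁, …, Υ̃_{m-1} = Υ_{m-1}/‖Υ_{m-1}‖₁, and Υ̃_m = (Σ_{i=m}^{|U|} Υ_i)/‖Σ_{i=m}^{|U|} Υ_i‖₁ (where Υ_i denotes row i of Υ). Then the m×|U| matrix Υ̃ with these rows is L1-normalized, (a_min, 0)-polarized (row i has i-th entry ≥ a_min and other entries ≤ 0), lies in the left null space of A, and its rows satisfy the nontrivial linear dependence Σ_{i=1}^{m-1} ‖Υ_i‖₁ Υ̃_i + ‖Σ_{i=m}^{|U|} Υ_i‖₁ Υ̃_m = 0. -/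
open Finset

theorem stmt_19 {U X : ℕ} [NeZero U] [NeZero X]
    (A : Matrix (Fin U) (Fin X) ℝ)
    (hA0 : ∀ i j, 0 ≤ A i j) (hAcol : ∀ j, ∑ i, A i j = 1)
    (hArow : ∀ i, ∃ j, A i j ≠ 0)
    (Υ : Matrix (Fin U) (Fin U) ℝ) (hne : Υ ≠ 0)
    (hnull : Υ * A = 0)
    (hbal : ∀ j, ∑ i, Υ i j = 0)
    (hdiag : ∀ j, 0 ≤ Υ j j)
    (hoff : ∀ i j, i ≠ j → Υ i j ≤ 0)
    (m : ℕ) (hm2 : 2 ≤ m) (hmU : m ≤ U)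
    -- exactly the first `m` columns of `Υ` are nonzero
    (hcols : ∀ j : Fin U, ((j : ℕ) < m ↔ ∃ i, Υ i j ≠ 0))
    -- the rows `Υ̃₁, …, Υ̃ₘ`
    (S : Fin m → Fin U → ℝ)
    (hSdef : ∀ (i : Fin m) (j : Fin U), S i j =
      if (i : ℕ) < m - 1 then
        Υ ⟨(i : ℕ), by have := i.isLt; omega⟩ j /
          (∑ l, |Υ ⟨(i : ℕ), by have := i.isLt; omega⟩ l|)
      else
        (∑ k ∈ Finset.univ.filter (fun k : Fin U => m - 1 ≤ (k : ℕ)), Υ k j) /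
          (∑ l, |∑ k ∈ Finset.univ.filter (fun k : Fin U => m - 1 ≤ (k : ℕ)), Υ k l|)) :
    -- the matrix `Υ̃` is L1-normalized, `(a_min, 0)`-polarized, its rows lie in
    -- the left null space of `A`, and its rows satisfy a nontrivial linear dependence
    (∀ i, ∑ j, |S i j| = 1) ∧
    (∀ (i : Fin m) (l : Fin X), ∑ j, S i j * A j l = 0) ∧
    (∀ i : Fin m, amin A ≤ S i ⟨(i : ℕ), by have := i.isLt; omega⟩) ∧
    (∀ (i : Fin m) (j : Fin U), (j : ℕ) ≠ (i : ℕ) → S i j ≤ 0) ∧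
    (∀ j : Fin U, (∑ i : Fin m,
      (if (i : ℕ) < m - 1 then ∑ l, |Υ ⟨(i : ℕ), by have := i.isLt; omega⟩ l|
       else ∑ l, |∑ k ∈ Finset.univ.filter (fun k : Fin U => m - 1 ≤ (k : ℕ)), Υ k l|) *
        S i j) = 0) := by

  have hUpos : 0 < U := Nat.pos_of_ne_zero (NeZero.ne U)
  -- columns with index ≥ m vanish
  have hcol0 : ∀ j : Fin U, m ≤ (j : ℕ) → ∀ i, Υ i j = 0 := by
    intro j hj i
    by_contra h
    have := (hcols j).mpr ⟨i, h⟩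
    omega
  -- entries of A are at most 1
  have hA1 : ∀ i j, A i j ≤ 1 := by
    intro i j
    calc A i j ≤ ∑ i', A i' j :=
          Finset.single_le_sum (fun i' _ => hA0 i' j) (mem_univ i)
      _ = 1 := hAcol j
  have hrowpos : ∀ i, 0 < ∑ j, A i j := by
    intro i
    obtain ⟨j, hj⟩ := hArow i
    exact Finset.sum_pos' (fun j' _ => hA0 i j')
      ⟨j, mem_univ j, lt_of_le_of_ne (hA0 i j) (Ne.symm hj)⟩
  have hAminpos : 0 < Amin A := by
    rw [Amin, Finset.lt_inf'_iff]
    exact fun i _ => hrowpos i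
  have hAminle : ∀ i, Amin A ≤ ∑ j, A i j := fun i => Finset.inf'_le _ (mem_univ i)
  have hrowleX : ∀ i, ∑ j, A i j ≤ (X : ℝ) := by
    intro i
    calc ∑ j, A i j ≤ ∑ _j : Fin X, (1 : ℝ) := Finset.sum_le_sum fun j _ => hA1 i j
      _ = X := by simp
  have hnull' : ∀ (k : Fin U) (l : Fin X), ∑ j, Υ k j * A j l = 0 := by
    intro k l
    have := congrFun (congrFun hnull k) l
    simpa [Matrix.mul_apply] using this
  -- rows with index ≥ m vanish
  have hrow0 : ∀ k : Fin U, m ≤ (k : ℕ) → ∀ j, Υ k j = 0 := by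
    intro k hk j
    have hle : ∀ j' : Fin U, Υ k j' ≤ 0 := by
      intro j'
      rcases eq_or_ne k j' with rfl | h
      · exact le_of_eq (hcol0 k hk k)
      · exact hoff k j' h
    obtain ⟨l, hl⟩ := hArow j
    have hterm : ∀ j' : Fin U, j' ∈ (univ : Finset (Fin U)) → Υ k j' * A j' l ≤ 0 :=
      fun j' _ => mul_nonpos_of_nonpos_of_nonneg (hle j') (hA0 j' l)
    have hzero : Υ k j * A j l = 0 :=
      (Finset.sum_eq_zero_iff_of_nonpos hterm).mp (hnull' k l) j (mem_univ j)
    rcases mul_eq_zero.mp hzero with h | h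
    · exact h
    · exact absurd h hl
  -- positive diagonal on the first m columns
  have hdiagpos : ∀ j : Fin U, (j : ℕ) < m → 0 < Υ j j := by
    intro j hj
    obtain ⟨i, hi⟩ := (hcols j).mp hj
    rcases lt_or_eq_of_le (hdiag j) with h | h
    · exact h
    · exfalso
      have hle : ∀ i' : Fin U, i' ∈ (univ : Finset (Fin U)) → Υ i' j ≤ 0 := by
        intro i' _
        rcases eq_or_ne i' j with rfl | hne
        · exact le_of_eq h.symm
        · exact hoff i' j hne
      exact hi ((Finset.sum_eq_zero_iff_of_nonpos hle).mp (hbal j) i (mem_univ i))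
  set N : Fin U → ℝ := fun k => ∑ l, |Υ k l| with hNdef
  have hNpos : ∀ k : Fin U, (k : ℕ) < m → 0 < N k := by
    intro k hk
    have h1 : |Υ k k| ≤ N k :=
      Finset.single_le_sum (fun l _ => abs_nonneg (Υ k l)) (mem_univ k)
    have := hdiagpos k hk
    calc (0 : ℝ) < Υ k k := this
      _ ≤ |Υ k k| := le_abs_self _
      _ ≤ N k := h1
  -- key quantitative bound
  have hkey : ∀ k : Fin U, (k : ℕ) < m → Amin A * N k ≤ (Amin A + X) * Υ k k := by
    intro k hk
    have hsum : ∑ j, Υ k j * (∑ l, A j l) = 0 := by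
      have h0 : ∑ l, ∑ j, Υ k j * A j l = 0 := by
        simp [hnull']
      rw [Finset.sum_comm] at h0
      simpa [Finset.mul_sum] using h0
    rw [← Finset.add_sum_erase _ _ (mem_univ k)] at hsum
    have hE1 : ∑ j ∈ univ.erase k, Υ k j * (∑ l, A j l) ≤
        ∑ j ∈ univ.erase k, Υ k j * Amin A := by
      refine Finset.sum_le_sum fun j hj => ?_
      exact mul_le_mul_of_nonpos_left (hAminle j)
        (hoff k j (Ne.symm (Finset.ne_of_mem_erase hj)))
    have hE2 : ∑ j ∈ univ.erase k, Υ k j * Amin A =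
        Amin A * ∑ j ∈ univ.erase k, Υ k j := by
      rw [← Finset.sum_mul, mul_comm]
    have h2 : Υ k k * (∑ l, A k l) ≤ Υ k k * X :=
      mul_le_mul_of_nonneg_left (hrowleX k) (hdiag k)
    have hNk : N k = Υ k k - ∑ j ∈ univ.erase k, Υ k j := by
      show (∑ l, |Υ k l|) = _
      rw [← Finset.add_sum_erase _ _ (mem_univ k), abs_of_nonneg (hdiag k),
        Finset.sum_congr rfl
          (fun j hj => abs_of_nonpos (hoff k j (Ne.symm (Finset.ne_of_mem_erase hj)))),
        Finset.sum_neg_distrib]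
      ring
    rw [hNk]
    set E := ∑ j ∈ univ.erase k, Υ k j
    rw [hE2] at hE1
    nlinarith [hE1, h2, hsum]
  -- reduction: the filter sum is just row (m-1)
  have hkm : m - 1 < U := by omega
  have hT : ∀ j : Fin U,
      (∑ k ∈ Finset.univ.filter (fun k : Fin U => m - 1 ≤ (k : ℕ)), Υ k j)
        = Υ ⟨m - 1, hkm⟩ j := by
    intro j
    refine Finset.sum_eq_single_of_mem _ (Finset.mem_filter.mpr ⟨mem_univ _, le_refl _⟩) fun b hb hbne => ?_
    refine hrow0 b ?_ j
    have hb' : m - 1 ≤ (b : ℕ) := (Finset.mem_filter.mp hb).2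
    have : (b : ℕ) ≠ m - 1 := fun h => hbne (Fin.ext h)
    omega
  have iULt : ∀ i : Fin m, (i : ℕ) < U := fun i => lt_of_lt_of_le i.isLt hmU
  have hS' : ∀ (i : Fin m) (j : Fin U), S i j = Υ ⟨(i : ℕ), iULt i⟩ j / N ⟨(i : ℕ), iULt i⟩ := by
    intro i j
    rw [hSdef]
    split_ifs with h
    · rfl
    · have hieq : (i : ℕ) = m - 1 := by have := i.isLt; omega
      have hmk : (⟨(i : ℕ), iULt i⟩ : Fin U) = ⟨m - 1, hkm⟩ := Fin.ext hieq
      rw [hT j, hmk, hNdef]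
      congr 1
      exact Finset.sum_congr rfl fun l _ => by rw [hT l]
  refine ⟨?_, ?_, ?_, ?_, ?_⟩
  · -- L1 normalization
    intro i
    have hpos := hNpos ⟨(i : ℕ), iULt i⟩ i.isLt
    have : ∑ j, |S i j| = (∑ j, |Υ ⟨(i : ℕ), iULt i⟩ j|) / N ⟨(i : ℕ), iULt i⟩ := by
      rw [Finset.sum_div]
      refine Finset.sum_congr rfl fun j _ => ?_
      rw [hS' i j, abs_div, abs_of_pos hpos]
    rw [this]
    exact div_self (ne_of_gt hpos)
  · -- left null space
    intro i l
    have hpos := hNpos ⟨(i : ℕ), iULt i⟩ i.isLt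
    have : ∑ j, S i j * A j l = (∑ j, Υ ⟨(i : ℕ), iULt i⟩ j * A j l) / N ⟨(i : ℕ), iULt i⟩ := by
      rw [Finset.sum_div]
      refine Finset.sum_congr rfl fun j _ => ?_
      rw [hS' i j, div_mul_eq_mul_div]
    rw [this, hnull', zero_div]
  · -- diagonal lower bound
    intro i
    have hkU : (⟨(i : ℕ), by have := i.isLt; omega⟩ : Fin U) = ⟨(i : ℕ), iULt i⟩ := rfl
    rw [hkU, hS' i ⟨(i : ℕ), iULt i⟩]
    set k : Fin U := ⟨(i : ℕ), iULt i⟩ with hk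
    have hkm' : (k : ℕ) < m := i.isLt
    have hpos := hNpos k hkm'
    have hXA : (0 : ℝ) < X + Amin A := by positivity
    have hU1 : (X : ℝ) + Amin A ≤ (U : ℝ) * ((X : ℝ) + Amin A) := by
      nlinarith [hXA, (Nat.one_le_cast (α := ℝ)).mpr hUpos]
    have h1 : amin A ≤ Amin A / ((X : ℝ) + Amin A) := by
      rw [amin]
      exact div_le_div_of_nonneg_left (le_of_lt hAminpos) hXA hU1
    refine le_trans h1 ?_
    rw [div_le_div_iff₀ hXA hpos]
    have := hkey k hkm'
    nlinarith [this]
  · -- off-diagonal sign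
    intro i j hne
    rw [hS' i j]
    have hpos := hNpos ⟨(i : ℕ), iULt i⟩ i.isLt
    refine div_nonpos_of_nonpos_of_nonneg ?_ (le_of_lt hpos)
    exact hoff _ j (fun h => hne (congrArg Fin.val h.symm))
  · -- linear dependence
    intro j
    have hCi : ∀ i : Fin m,
        (if (i : ℕ) < m - 1 then ∑ l, |Υ ⟨(i : ℕ), by have := i.isLt; omega⟩ l|
         else ∑ l, |∑ k ∈ Finset.univ.filter (fun k : Fin U => m - 1 ≤ (k : ℕ)), Υ k l|)
          = N ⟨(i : ℕ), iULt i⟩ := by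
      intro i
      split_ifs with h
      · rfl
      · have hieq : (i : ℕ) = m - 1 := by have := i.isLt; omega
        have hmk : (⟨(i : ℕ), iULt i⟩ : Fin U) = ⟨m - 1, hkm⟩ := Fin.ext hieq
        rw [hmk, hNdef]
        exact Finset.sum_congr rfl fun l _ => by rw [hT l]
    have hterm : ∀ i : Fin m,
        (if (i : ℕ) < m - 1 then ∑ l, |Υ ⟨(i : ℕ), by have := i.isLt; omega⟩ l|
         else ∑ l, |∑ k ∈ Finset.univ.filter (fun k : Fin U => m - 1 ≤ (k : ℕ)), Υ k l|)
          * S i j = Υ ⟨(i : ℕ), iULt i⟩ j := by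
      intro i
      rw [hCi i, hS' i j]
      exact mul_div_cancel₀ _ (ne_of_gt (hNpos ⟨(i : ℕ), iULt i⟩ i.isLt))
    rw [Finset.sum_congr rfl fun i _ => hterm i]
    -- now ∑ i : Fin m, Υ ⟨i, _⟩ j = 0
    set f : ℕ → ℝ := fun n => if h : n < U then Υ ⟨n, h⟩ j else 0 with hf
    have h1 : ∑ i : Fin m, Υ ⟨(i : ℕ), iULt i⟩ j = ∑ n ∈ Finset.range m, f n := by
      rw [← Fin.sum_univ_eq_sum_range f m]
      refine Finset.sum_congr rfl fun i _ => ?_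
      simp only [hf, dif_pos (iULt i)]
    have h2 : ∑ n ∈ Finset.range U, f n = 0 := by
      rw [← Fin.sum_univ_eq_sum_range f U]
      have : ∀ k : Fin U, f (k : ℕ) = Υ k j := by
        intro k
        simp only [hf, dif_pos k.isLt]
      rw [Finset.sum_congr rfl fun k _ => this k]
      exact hbal j
    have h3 : ∑ n ∈ Finset.Ico m U, f n = 0 := by
      refine Finset.sum_eq_zero fun n hn => ?_
      obtain ⟨hmn, hnU⟩ := Finset.mem_Ico.mp hn
      simp only [hf]
      rw [dif_pos hnU]
      exact hrow0 ⟨n, hnU⟩ hmn j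
    have h4 : (∑ n ∈ Finset.range m, f n) + ∑ n ∈ Finset.Ico m U, f n
        = ∑ n ∈ Finset.range U, f n := by
      simp only [Finset.range_eq_Ico]
      exact Finset.sum_Ico_consecutive f (Nat.zero_le m) hmU
    rw [h1]
    linarith [h2, h3, h4]
end
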